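/- arXiv:2210.01704 — 2 statements merged into one kernel-verified Lean document; each statement's English description precedes it below -/
import Mathlib

section
/- Let d ≥ 1 and let f : [0,1]^d → ℝ be continuous. Then f(x) = ∑_{j ∈ ℕ_{−1}^d} ∑_{k ∈ D_j} d²_{j,k}(f) v_{j,k}(x) for all x ∈ [0,1]^d, and the convergence is uniform: the partial sums over {j ∈ ℕ_{−1}^d : max_i (j_i)_+ ≤ N} converge to f in the sup-norm on [0,1]^d as N → ∞. -/
open MeasureTheory Filter
open scoped ENNReal NNReal

noncomputable section

/-- The univariate hat function `v`. -/
def hatFn (x : ℝ) : ℝ := if 0 ≤ x ∧ x ≤ 1 then 1 - |2 * x - 1| else 0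

/-- Second difference with step `h` in coordinate `i`. -/
def secondDiff {d : ℕ} {K : Type*} [Field K] (i : Fin d) (h : ℝ)
    (f : (Fin d → ℝ) → K) (x : Fin d → ℝ) : K :=
  f (Function.update x i (x i + 2 * h)) - 2 * f (Function.update x i (x i + h)) + f x

/-- Iterated second differences over `e(j) = {i | j i ≠ -1}` with steps `2^{-j i - 1}`. -/
def iterDiff {d : ℕ} {K : Type*} [Field K] (j : Fin d → ℤ)
    (f : (Fin d → ℝ) → K) : (Fin d → ℝ) → K :=
  (Finset.filter (fun i => j i ≠ -1) Finset.univ).toList.foldr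
    (fun i g => secondDiff i ((2:ℝ) ^ (-(j i) - 1)) g) f

/-- The point `x_{j,k}`. -/
def xnode {d : ℕ} (j k : Fin d → ℤ) : Fin d → ℝ :=
  fun i => (2:ℝ) ^ (-(max (j i) 0)) * (k i : ℝ)

/-- Faber–Schauder coefficient `d²_{j,k}(f)`. -/
def faberCoeff {d : ℕ} {K : Type*} [Field K] (j k : Fin d → ℤ)
    (f : (Fin d → ℝ) → K) : K :=
  (-(1:K) / 2) ^ (Finset.filter (fun i => j i ≠ -1) Finset.univ).card *
    iterDiff j f (xnode j k)

/-- Univariate Faber functions on ℝ (translations over ℤ). -/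
def faberR (j k : ℤ) (x : ℝ) : ℝ :=
  if j = -1 then hatFn ((x + 1 + k) / 2) else hatFn ((2:ℝ) ^ j.toNat * x - k)

/-- Tensorized Faber functions on ℝ^d. -/
def faberFnR {d : ℕ} (j k : Fin d → ℤ) (x : Fin d → ℝ) : ℝ :=
  ∏ i, faberR (j i) (k i) (x i)

/-- Univariate Faber functions for the cube `[0,1]`. -/
def faberC (j k : ℤ) (x : ℝ) : ℝ :=
  if j = -1 then (if k = 0 then 1 - x else x) else hatFn ((2:ℝ) ^ j.toNat * x - k)

/-- Tensorized Faber functions for the cube `[0,1]^d`. -/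
def faberFnC {d : ℕ} (j k : Fin d → ℤ) (x : Fin d → ℝ) : ℝ :=
  ∏ i, faberC (j i) (k i) (x i)

/-- Index set `D_j`. -/
def Dj (j : ℤ) : Finset ℤ := if j = -1 then {0, 1} else Finset.Ico 0 (2 ^ j.toNat)

/-- Index set `D_j` in `d` dimensions. -/
def DjSet {d : ℕ} (j : Fin d → ℤ) : Finset (Fin d → ℤ) :=
  Fintype.piFinset fun i => Dj (j i)

/-- Fourier transform on ℝ^d. -/
def ftd {d : ℕ} (f : (Fin d → ℝ) → ℂ) (ξ : Fin d → ℝ) : ℂ :=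
  (((2 * Real.pi) ^ (-(d:ℝ) / 2) : ℝ) : ℂ) *
    ∫ x : Fin d → ℝ, Complex.exp (-Complex.I * ((∑ i, x i * ξ i : ℝ) : ℂ)) * f x

/-- Inverse Fourier transform on ℝ^d. -/
def ftdInv {d : ℕ} (f : (Fin d → ℝ) → ℂ) (ξ : Fin d → ℝ) : ℂ :=
  (((2 * Real.pi) ^ (-(d:ℝ) / 2) : ℝ) : ℂ) *
    ∫ x : Fin d → ℝ, Complex.exp (Complex.I * ((∑ i, x i * ξ i : ℝ) : ℂ)) * f x

/-- Univariate Fourier transform. -/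
def ft1 (f : ℝ → ℂ) (ξ : ℝ) : ℂ :=
  (((2 * Real.pi) ^ (-(1:ℝ) / 2) : ℝ) : ℂ) *
    ∫ x : ℝ, Complex.exp (-Complex.I * ((x * ξ : ℝ) : ℂ)) * f x

/-- A dyadic decomposition of unity on ℝ. -/
structure IsDyadicDecomposition (φ : ℕ → ℝ → ℝ) : Prop where
  smooth : ∀ n, ContDiff ℝ (⊤ : ℕ∞) (φ n)
  compSupp : ∀ n, HasCompactSupport (φ n)
  supp0 : Function.support (φ 0) ⊆ {x : ℝ | |x| ≤ 2}
  suppn : ∀ n : ℕ, 1 ≤ n →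
    Function.support (φ n) ⊆ {x : ℝ | (2:ℝ) ^ (n - 1) ≤ |x| ∧ |x| ≤ (2:ℝ) ^ (n + 1)}
  deriv_bound : ∀ l : ℕ, ∃ c : ℝ, ∀ (n : ℕ) (x : ℝ),
    (2:ℝ) ^ (n * l) * |iteratedDeriv l (φ n) x| ≤ c
  sum_one : ∀ x : ℝ, ∑' n, φ n x = 1

/-- Extension of `φ` by zero to negative integer indices. -/
def phiZ (φ : ℕ → ℝ → ℝ) (n : ℤ) : ℝ → ℝ := if 0 ≤ n then φ n.toNat else 0

/-- The building block `f_ℓ`. -/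
def fblock {d : ℕ} (φ : ℕ → ℝ → ℝ) (f : (Fin d → ℝ) → ℂ) (l : Fin d → ℤ) :
    (Fin d → ℝ) → ℂ :=
  ftdInv fun ξ => (∏ i, ((phiZ φ (l i) (ξ i) : ℝ) : ℂ)) * ftd f ξ

/-- The Besov norm `B_φ^{1/p}`. -/
def BnormE {d : ℕ} (φ : ℕ → ℝ → ℝ) (p : ℝ) (f : (Fin d → ℝ) → ℂ) : ℝ≥0∞ :=
  ∑' j : Fin d → ℕ, ENNReal.ofReal ((2:ℝ) ^ ((∑ i, (j i : ℝ)) / p)) *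
    eLpNorm (fblock φ f fun i => (j i : ℤ)) (ENNReal.ofReal p) volume

/-- The Triebel–Lizorkin norm `T_φ`. -/
def TnormE {d : ℕ} (φ : ℕ → ℝ → ℝ) (f : (Fin d → ℝ) → ℂ) : ℝ≥0∞ :=
  ∫⁻ x, ⨆ j : Fin d → ℕ,
    ENNReal.ofReal ((2:ℝ) ^ (∑ i, j i) * ‖fblock φ f (fun i => (j i : ℤ)) x‖)

/-- The Smolyak truncation `I_n f` of the Faber–Schauder series on the cube. -/
def smolyakC {d : ℕ} (n : ℕ) (f : (Fin d → ℝ) → ℂ) (x : Fin d → ℝ) : ℂ :=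
  ∑ j ∈ (Fintype.piFinset fun _ : Fin d => Finset.Icc (-1:ℤ) (n:ℤ)).filter
      (fun j => (∑ i, max (j i) 0) ≤ (n:ℤ)),
    ∑ k ∈ DjSet j, faberCoeff j k f * (faberFnC j k x : ℂ)

/-- The unit cube `[0,1]^d`. -/
def unitCube (d : ℕ) : Set (Fin d → ℝ) := Set.Icc 0 1

/-- The dyadic box of level `j` and position `k`. -/
def boxSet {d : ℕ} (j : Fin d → ℕ) (k : Fin d → ℤ) : Set (Fin d → ℝ) :=
  Set.univ.pi fun i =>
    Set.Icc ((2:ℝ) ^ (-(j i : ℤ)) * (k i : ℝ)) ((2:ℝ) ^ (-(j i : ℤ)) * ((k i : ℝ) + 1))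

/-- `m`-th forward difference (ℂ-valued). -/
def fdiffC (m : ℕ) (h : ℝ) (f : ℝ → ℂ) (x : ℝ) : ℂ :=
  ∑ i ∈ Finset.range (m + 1), (-1 : ℂ) ^ (m - i) * (m.choose i : ℂ) * f (x + i * h)

/-- `m`-th forward difference (ℝ-valued). -/
def fdiffR (m : ℕ) (h : ℝ) (g : ℝ → ℝ) (x : ℝ) : ℝ :=
  ∑ i ∈ Finset.range (m + 1), (-1 : ℝ) ^ (m - i) * (m.choose i : ℝ) * g (x + i * h)

/-- The hat function at level `j`: `v_{j,0}`. -/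
def hatj (j : ℕ) (x : ℝ) : ℝ := hatFn ((2:ℝ) ^ j * x)

/-- sup of `L_p` norms of `m`-th differences with step `0 < h ≤ 2^{-k}`. -/
def modk (p : ℝ) (m : ℕ) (k : ℕ) (g : ℝ → ℝ) : ℝ≥0∞ :=
  ⨆ h ∈ Set.Ioc (0:ℝ) ((2:ℝ) ^ (-(k:ℤ))),
    eLpNorm (fdiffR m h g) (ENNReal.ofReal p) volume

/-- The Besov quasinorm `N(g)` built from `L_p` moduli of smoothness. -/
def NBesov (p : ℝ) (q : ℝ≥0∞) (m : ℕ) (g : ℝ → ℝ) : ℝ≥0∞ :=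
  eLpNorm g (ENNReal.ofReal p) volume +
    (if q = ⊤ then ⨆ k : ℕ, ENNReal.ofReal ((2:ℝ) ^ ((k:ℝ) / p)) * modk p m k g
     else (∑' k : ℕ,
        (ENNReal.ofReal ((2:ℝ) ^ ((k:ℝ) / p)) * modk p m k g) ^ q.toReal) ^ (1 / q.toReal))


/-!
In one variable, the Faber terms of level `M` turn the piecewise linear interpolant `I_M g` on the
grid `2^-M ℤ` into `I_{M+1} g`: by the two-scale relation `φ t = φ (2t) + φ (2t + 1)/2 +
φ (2t - 1)/2` of `φ t = max 0 (1 - |t|)` the coarse hats are combinations of fine hats, and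
`d²_{M,k}(g)` is exactly the surplus of `g` over the coarse interpolant at the odd fine node
`(2k+1) 2^-(M+1)`. Hence the partial sum over levels `≤ N` is `I_{N+1} g`. Coefficients and Faber
functions are tensor products of univariate ones, so in `d` variables the partial sum is the tensor
product interpolant: a convex combination of values of `f` at grid points within `2^-(N+1)` of `x`
in every coordinate. Uniform continuity of `f` on the compact cube gives uniform convergence.
-/

open Finset

namespace FaberSchauder

lemma sum_range_two_mul_add_one {M : Type*} [AddCommMonoid M] (F : ℕ → M) (n : ℕ) :
    ∑ i ∈ range (2 * n + 1), F i =
      ∑ m ∈ range (n + 1), F (2 * m) + ∑ k ∈ range n, F (2 * k + 1) := by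
  induction n with
  | zero => simp
  | succ n ih =>
    rw [show 2 * (n + 1) + 1 = 2 * n + 1 + 1 + 1 by ring, sum_range_succ, sum_range_succ, ih,
      sum_range_succ (fun m => F (2 * m)) (n + 1), sum_range_succ (fun k => F (2 * k + 1)) n,
      show 2 * (n + 1) = 2 * n + 1 + 1 by ring]
    abel

section PiFinset

variable {ι α β : Type*} [Fintype ι] [DecidableEq ι] {R : Type*} [AddCommMonoid R]

lemma sum_piFinset_sum_piFinset (A : ι → Finset α) (B : ι → Finset β)
    (F : (ι → α) → (ι → β) → R) :
    ∑ a ∈ Fintype.piFinset A, ∑ b ∈ Fintype.piFinset B, F a b =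
      ∑ σ ∈ Fintype.piFinset fun i => A i ×ˢ B i,
        F (fun i => (σ i).1) (fun i => (σ i).2) := by
  rw [← sum_product']
  refine sum_equiv (Equiv.arrowProdEquivProdArrow ι (fun _ => α) (fun _ => β)).symm
    (fun p => ?_) fun _ _ => rfl
  simp [Fintype.mem_piFinset, forall_and]

lemma sum_piFinset_update (S : ι → Finset α) (a : ι) (T : Finset α) {x : α} (hS : S a = {x})
    (F : (ι → α) → R) :
    ∑ ε ∈ Fintype.piFinset (Function.update S a T), F ε =
      ∑ t ∈ T, ∑ ε ∈ Fintype.piFinset S, F (Function.update ε a t) := by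
  rw [← sum_product']
  refine sum_nbij' (fun ε => (ε a, Function.update ε a x)) (fun p => Function.update p.2 a p.1)
    ?_ ?_ ?_ ?_ ?_
  · intro ε hε
    simp only [mem_product, Fintype.mem_piFinset] at hε ⊢
    refine ⟨by simpa using hε a, fun i => ?_⟩
    rcases eq_or_ne i a with rfl | hi
    · simp [hS]
    · simpa [hi] using hε i
  · rintro ⟨t, ε⟩ hp
    simp only [mem_product, Fintype.mem_piFinset] at hp ⊢
    intro i
    rcases eq_or_ne i a with rfl | hi
    · simpa using hp.1
    · simpa [hi] using hp.2 i
  · intro ε _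
    simp
  · rintro ⟨t, ε⟩ hp
    have hεa : ε a = x := by
      simpa [hS] using Fintype.mem_piFinset.1 (mem_product.1 hp).2 a
    simp [← hεa]
  · intro ε _
    simp

lemma sum_piFinset_fin_succ {n : ℕ} (S : Fin (n + 1) → Finset α)
    (F : (Fin (n + 1) → α) → R) :
    ∑ a ∈ Fintype.piFinset S, F a =
      ∑ x ∈ S 0, ∑ a ∈ Fintype.piFinset fun i => S i.succ, F (Fin.cons x a) := by
  have h := filter_piFinset_eq_map_consEquiv S (fun _ => True)
  rw [filter_true, filter_true] at h
  rw [h, sum_map, sum_product]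
  rfl

end PiFinset

/-- If the quadrature rules `(A, a i, s)` and `(B, b i, t)` agree for every `i`, so do their
tensor products. -/
lemma sum_piFinset_prod_mul_comp_eq {α β X R : Type*} [CommSemiring R] {d : ℕ} (A : Finset α)
    (B : Finset β) (a : Fin d → α → R) (b : Fin d → β → R) (s : α → X) (t : β → X)
    (h : ∀ i (g : X → R), ∑ x ∈ A, a i x * g (s x) = ∑ y ∈ B, b i y * g (t y))
    (f : (Fin d → X) → R) :
    ∑ p ∈ Fintype.piFinset (fun _ => A), (∏ i, a i (p i)) * f (s ∘ p) =
      ∑ q ∈ Fintype.piFinset (fun _ => B), (∏ i, b i (q i)) * f (t ∘ q) := by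
  induction d with
  | zero =>
    simp only [Fintype.piFinset_of_isEmpty, univ_unique, sum_singleton, univ_eq_empty,
      prod_empty, one_mul]
    exact congrArg f (Subsingleton.elim _ _)
  | succ n ih =>
    have hslice : ∀ u : X,
        ∑ p ∈ Fintype.piFinset (fun _ : Fin n => A),
            (∏ i, a i.succ (p i)) * f (Fin.cons u (s ∘ p)) =
          ∑ q ∈ Fintype.piFinset (fun _ : Fin n => B),
            (∏ i, b i.succ (q i)) * f (Fin.cons u (t ∘ q)) := fun u =>
      ih (fun i => a i.succ) (fun i => b i.succ) (fun i => h i.succ) fun p => f (Fin.cons u p)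
    simp only [sum_piFinset_fin_succ, Fin.prod_univ_succ, Fin.cons_zero, Fin.cons_succ,
      Fin.comp_cons, mul_assoc, ← mul_sum, hslice]
    exact h 0 fun u => ∑ q ∈ Fintype.piFinset (fun _ => B),
      (∏ i, b i.succ (q i)) * f (Fin.cons u (t ∘ q))

lemma abs_sub_sum_mul_le {ι : Type*} (s : Finset ι) {w y : ι → ℝ} {c ε : ℝ}
    (hw : ∀ m ∈ s, 0 ≤ w m) (hsum : ∑ m ∈ s, w m = 1)
    (hy : ∀ m ∈ s, w m ≠ 0 → |c - y m| ≤ ε) :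
    |c - ∑ m ∈ s, w m * y m| ≤ ε := by
  have hterm : ∀ m ∈ s, |w m * (c - y m)| ≤ w m * ε := fun m hm => by
    rw [abs_mul, abs_of_nonneg (hw m hm)]
    rcases eq_or_ne (w m) 0 with h | h
    · simp [h]
    · exact mul_le_mul_of_nonneg_left (hy m hm h) (hw m hm)
  calc |c - ∑ m ∈ s, w m * y m| = |∑ m ∈ s, w m * (c - y m)| := by
        simp only [mul_sub, sum_sub_distrib, ← sum_mul, hsum, one_mul]
    _ ≤ ∑ m ∈ s, |w m * (c - y m)| := abs_sum_le_sum_abs _ _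
    _ ≤ ∑ m ∈ s, w m * ε := sum_le_sum hterm
    _ = ε := by rw [← sum_mul, hsum, one_mul]

def nodalHat (M : ℕ) (m : ℤ) (x : ℝ) : ℝ := max 0 (1 - |2 ^ M * x - m|)

lemma nodalHat_nonneg (M : ℕ) (m : ℤ) (x : ℝ) : 0 ≤ nodalHat M m x := le_max_left _ _

lemma max_zero_one_sub_abs_div_two (t : ℝ) :
    max 0 (1 - |t| / 2) =
      max 0 (1 - |t|) + max 0 (1 - |t + 1|) / 2 + max 0 (1 - |t - 1|) / 2 := by
  rcases abs_cases t with ⟨h, _⟩ | ⟨h, _⟩ <;>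
  rcases abs_cases (t + 1) with ⟨h', _⟩ | ⟨h', _⟩ <;>
  rcases abs_cases (t - 1) with ⟨h'', _⟩ | ⟨h'', _⟩ <;>
  simp only [h, h', h'', max_def] <;> split_ifs <;> linarith

lemma nodalHat_eq_add (M : ℕ) (m : ℤ) (x : ℝ) :
    nodalHat M m x = nodalHat (M + 1) (2 * m) x + nodalHat (M + 1) (2 * m - 1) x / 2
      + nodalHat (M + 1) (2 * m + 1) x / 2 := by
  have key := max_zero_one_sub_abs_div_two (2 ^ (M + 1) * x - 2 * m)
  have hM : |(2:ℝ) ^ (M + 1) * x - 2 * m| / 2 = |2 ^ M * x - m| := by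
    rw [show (2:ℝ) ^ (M + 1) * x - 2 * m = 2 * (2 ^ M * x - m) by ring, abs_mul, abs_two]
    ring
  simp only [nodalHat, ← hM, key]
  push_cast
  ring_nf

lemma nodalHat_eq_zero_of_le_neg_one {M : ℕ} {m : ℤ} {x : ℝ} (hm : m ≤ -1) (hx : 0 ≤ x) :
    nodalHat M m x = 0 := by
  have hm' : (m : ℝ) ≤ -1 := by exact_mod_cast hm
  have : 0 ≤ (2:ℝ) ^ M * x := by positivity
  rw [nodalHat, abs_of_nonneg (by linarith), max_eq_left (by linarith)]

lemma nodalHat_eq_zero_of_two_pow_lt {M : ℕ} {m : ℤ} {x : ℝ} (hm : 2 ^ M < m) (hx : x ≤ 1) :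
    nodalHat M m x = 0 := by
  have hm' : (2:ℝ) ^ M + 1 ≤ m := by exact_mod_cast hm
  have : (2:ℝ) ^ M * x ≤ 2 ^ M := mul_le_of_le_one_right (by positivity) hx
  rw [nodalHat, abs_of_nonpos (by linarith), max_eq_left (by linarith)]

lemma abs_sub_lt_of_nodalHat_ne_zero {M : ℕ} {m : ℤ} {x : ℝ} (h : nodalHat M m x ≠ 0) :
    |x - m / 2 ^ M| < 1 / 2 ^ M := by
  have hlt : |2 ^ M * x - m| < 1 := by
    by_contra! hle
    exact h (max_eq_left (by linarith))
  rw [show x - m / 2 ^ M = (2 ^ M * x - m) / 2 ^ M by field_simp, abs_div,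
    abs_of_pos (by positivity : (0:ℝ) < 2 ^ M)]
  gcongr

lemma hatFn_eq_max (u : ℝ) : hatFn u = max 0 (1 - |2 * u - 1|) := by
  unfold hatFn
  split_ifs with h
  · rw [max_eq_right]; exact sub_nonneg.2 (abs_le.2 ⟨by linarith, by linarith⟩)
  · rw [max_eq_left]
    push Not at h
    rcases lt_or_ge u 0 with hu | hu
    · rw [abs_of_neg (by linarith)]; linarith
    · rw [abs_of_pos (by linarith [h hu])]; linarith [h hu]

lemma faberC_eq_nodalHat_of_nonneg {j : ℤ} (hj : 0 ≤ j) (k : ℤ) (x : ℝ) :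
    faberC j k x = nodalHat (j.toNat + 1) (2 * k + 1) x := by
  rw [faberC, if_neg (by omega), hatFn_eq_max, nodalHat, pow_succ]
  push_cast
  ring_nf

lemma faberC_neg_one_zero {x : ℝ} (hx : x ∈ Set.Icc (0:ℝ) 1) :
    faberC (-1) 0 x = nodalHat 0 0 x := by
  rw [faberC, nodalHat, if_pos rfl, if_pos rfl]
  simp [abs_of_nonneg hx.1, hx.2]

lemma faberC_neg_one_one {x : ℝ} (hx : x ∈ Set.Icc (0:ℝ) 1) :
    faberC (-1) 1 x = nodalHat 0 1 x := by
  rw [faberC, nodalHat, if_pos rfl, if_neg one_ne_zero]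
  simp [abs_of_nonpos (sub_nonpos.2 hx.2), hx.1]

def secondDiffCoeff (e : ℕ) : ℝ := if e = 1 then -2 else 1

/-- `d²_{j,k}(g) = ∑_{e < 3} faberWeight j e * g (faberNode j k e)`; at level `j = -1` only
`e = 0` has a nonzero weight, and there `faberNode (-1) k 0 = k`. -/
def faberWeight (j : ℤ) (e : ℕ) : ℝ :=
  if j = -1 then (if e = 0 then 1 else 0) else -secondDiffCoeff e / 2

def faberNode (j k : ℤ) (e : ℕ) : ℝ := 2 ^ (-max j 0) * k + e * 2 ^ (-j - 1)

def faberCoeff₁ (j k : ℤ) (g : ℝ → ℝ) : ℝ :=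
  ∑ e ∈ range 3, faberWeight j e * g (faberNode j k e)

def dyadicInterp (M : ℕ) (g : ℝ → ℝ) (x : ℝ) : ℝ :=
  ∑ m ∈ range (2 ^ M + 1), nodalHat M m x * g (m / 2 ^ M)

lemma faberCoeff₁_neg_one (k : ℤ) (g : ℝ → ℝ) : faberCoeff₁ (-1) k g = g k := by
  simp [faberCoeff₁, faberWeight, faberNode]

lemma faberCoeff₁_natCast (M : ℕ) (k : ℤ) (g : ℝ → ℝ) :
    faberCoeff₁ M k g = g ((2 * k + 1) / 2 ^ (M + 1))
      - (g (2 * k / 2 ^ (M + 1)) + g ((2 * k + 2) / 2 ^ (M + 1))) / 2 := by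
  have hnode : ∀ e : ℕ, faberNode M k e = (2 * k + e) / 2 ^ (M + 1) := fun e => by
    rw [faberNode, max_eq_left (by positivity), sub_eq_add_neg, zpow_add₀ two_ne_zero,
      zpow_neg, zpow_neg, zpow_natCast, pow_succ]
    field_simp
  have hM : (M : ℤ) ≠ -1 := by omega
  simp only [faberCoeff₁, faberWeight, secondDiffCoeff, hnode, hM, sum_range_succ,
    sum_range_zero, if_false]
  norm_num
  ring_nf

lemma sum_faberC_natCast (M : ℕ) (g : ℝ → ℝ) (x : ℝ) :
    ∑ k ∈ Dj M, faberCoeff₁ M k g * faberC M k x =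
      ∑ k ∈ range (2 ^ M), faberCoeff₁ M k g * nodalHat (M + 1) (2 * k + 1) x := by
  have hcard : ((2:ℤ) ^ M - 0).toNat = 2 ^ M := by
    rw [sub_zero]; exact_mod_cast Int.toNat_natCast (2 ^ M)
  rw [Dj, if_neg (by omega), Int.toNat_natCast, Int.Ico_eq_finset_map, hcard, sum_map]
  simp [faberC_eq_nodalHat_of_nonneg]

/-- One refinement step, with `hat i` the fine hats and `G i` the fine nodal values: the coarse
interpolant written in fine hats via the two-scale relation, plus the surpluses at the odd nodes,
is the fine interpolant. -/
lemma sum_refine_add_sum_surplus (n : ℕ) (hat : ℤ → ℝ) (G : ℕ → ℝ)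
    (hleft : hat (-1) = 0) (hright : hat (2 * n + 1) = 0) :
    ∑ m ∈ range (n + 1), (hat (2 * m) + hat (2 * m - 1) / 2 + hat (2 * m + 1) / 2) * G (2 * m)
      + ∑ k ∈ range n, (G (2 * k + 1) - (G (2 * k) + G (2 * k + 2)) / 2) * hat (2 * k + 1)
      = ∑ i ∈ range (2 * n + 1), hat i * G i := by
  have hshift : ∑ m ∈ range (n + 1), hat (2 * m - 1) * G (2 * m)
      = ∑ k ∈ range n, hat (2 * k + 1) * G (2 * k + 2) := by
    rw [sum_range_succ']
    push_cast
    simp only [hleft, zero_mul, add_zero]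
    exact sum_congr rfl fun k _ => by ring_nf
  have htop : ∑ m ∈ range (n + 1), hat (2 * m + 1) * G (2 * m)
      = ∑ k ∈ range n, hat (2 * k + 1) * G (2 * k) := by
    rw [sum_range_succ, hright, zero_mul, add_zero]
  rw [sum_range_two_mul_add_one]
  push_cast
  simp only [add_mul, sub_mul, div_mul_eq_mul_div, sum_add_distrib, sum_sub_distrib, ← sum_div]
  rw [hshift, htop]
  simp only [mul_comm (G _), add_div]
  ring

lemma dyadicInterp_succ (M : ℕ) (g : ℝ → ℝ) {x : ℝ} (hx : x ∈ Set.Icc (0:ℝ) 1) :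
    dyadicInterp (M + 1) g x =
      dyadicInterp M g x + ∑ k ∈ Dj M, faberCoeff₁ M k g * faberC M k x := by
  have hnode : ∀ m : ℕ, (m : ℝ) / 2 ^ M = ((2 * m : ℕ) : ℝ) / 2 ^ (M + 1) := fun m => by
    push_cast; rw [pow_succ]; field_simp
  have h := sum_refine_add_sum_surplus (2 ^ M) (fun n => nodalHat (M + 1) n x)
    (fun n => g (n / 2 ^ (M + 1))) (nodalHat_eq_zero_of_le_neg_one le_rfl hx.1)
    (nodalHat_eq_zero_of_two_pow_lt (by push_cast; rw [pow_succ]; omega) hx.2)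
  have hcoarse : dyadicInterp M g x = ∑ m ∈ range (2 ^ M + 1),
      (nodalHat (M + 1) (2 * m) x + nodalHat (M + 1) (2 * m - 1) x / 2
        + nodalHat (M + 1) (2 * m + 1) x / 2) * g (((2 * m : ℕ) : ℝ) / 2 ^ (M + 1)) :=
    sum_congr rfl fun m _ => by rw [nodalHat_eq_add, hnode]
  rw [hcoarse, dyadicInterp, sum_faberC_natCast, show 2 ^ (M + 1) + 1 = 2 * 2 ^ M + 1 by ring,
    ← h]
  congr 1
  refine sum_congr rfl fun k _ => ?_
  rw [faberCoeff₁_natCast]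
  push_cast
  ring_nf

lemma sum_faberC_neg_one (g : ℝ → ℝ) {x : ℝ} (hx : x ∈ Set.Icc (0:ℝ) 1) :
    ∑ k ∈ Dj (-1), faberCoeff₁ (-1) k g * faberC (-1) k x = dyadicInterp 0 g x := by
  rw [Dj, if_pos rfl, sum_pair zero_ne_one, faberC_neg_one_zero hx, faberC_neg_one_one hx,
    faberCoeff₁_neg_one, faberCoeff₁_neg_one]
  simp [dyadicInterp, sum_range_succ]
  ring

lemma sum_faberC_eq_dyadicInterp (n : ℕ) (g : ℝ → ℝ) {x : ℝ}
    (hx : x ∈ Set.Icc (0:ℝ) 1) :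
    ∑ j ∈ Icc (-1 : ℤ) (n - 1), ∑ k ∈ Dj j, faberCoeff₁ j k g * faberC j k x =
      dyadicInterp n g x := by
  induction n with
  | zero => simpa using sum_faberC_neg_one g hx
  | succ n ih =>
    rw [show ((n + 1 : ℕ) : ℤ) - 1 = n - 1 + 1 by push_cast; ring,
      ← insert_Icc_right_eq_Icc_add_one (by omega), sum_insert (by simp), ih, sub_add_cancel,
      dyadicInterp_succ n g hx, add_comm]

lemma dyadicInterp_one (M : ℕ) {x : ℝ} (hx : x ∈ Set.Icc (0:ℝ) 1) :
    dyadicInterp M (fun _ => 1) x = 1 := by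
  induction M with
  | zero =>
    rw [← sum_faberC_neg_one _ hx, Dj, if_pos rfl, sum_pair zero_ne_one]
    simp [faberC, faberCoeff₁_neg_one]
  | succ M ih => simp [dyadicInterp_succ M _ hx, ih, faberCoeff₁_natCast]

lemma sum_nodalHat_eq_one (M : ℕ) {x : ℝ} (hx : x ∈ Set.Icc (0:ℝ) 1) :
    ∑ m ∈ range (2 ^ M + 1), nodalHat M m x = 1 := by
  simpa [dyadicInterp] using dyadicInterp_one M hx

section

variable {d : ℕ}

lemma secondDiff_eq_sum (i : Fin d) (h : ℝ) (g : (Fin d → ℝ) → ℝ) (x : Fin d → ℝ) :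
    secondDiff i h g x =
      ∑ t ∈ range 3, secondDiffCoeff t * g (Function.update x i (x i + t * h)) := by
  simp only [secondDiff, secondDiffCoeff, sum_range_succ, sum_range_zero]
  norm_num
  ring_nf

lemma foldr_secondDiff_eq_sum (h : Fin d → ℝ) (f : (Fin d → ℝ) → ℝ) {L : List (Fin d)}
    (hL : L.Nodup) (x : Fin d → ℝ) :
    L.foldr (fun i g => secondDiff i (h i) g) f x =
      ∑ e ∈ Fintype.piFinset (fun i => if i ∈ L then range 3 else {0}),
        (∏ i, secondDiffCoeff (e i)) * f (fun i => x i + e i * h i) := by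
  induction L generalizing x with
  | nil => simp [Fintype.piFinset_singleton (fun _ : Fin d => 0), secondDiffCoeff]
  | cons a L ih =>
    obtain ⟨ha, hL⟩ := List.nodup_cons.1 hL
    have hfam : (fun i => if i ∈ a :: L then range 3 else {0}) =
        Function.update (fun i => if i ∈ L then range 3 else {0}) a (range 3) := by
      funext i
      rcases eq_or_ne i a with rfl | hi <;> simp [*]
    rw [hfam, sum_piFinset_update _ a _ (x := 0) (by simp [ha]), List.foldr_cons,
      secondDiff_eq_sum]
    refine sum_congr rfl fun t _ => ?_
    rw [ih hL, mul_sum]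
    refine sum_congr rfl fun e he => ?_
    have hea : e a = 0 := by simpa [ha] using Fintype.mem_piFinset.1 he a
    have hprod : ∏ i, secondDiffCoeff (Function.update e a t i) =
        secondDiffCoeff t * ∏ i, secondDiffCoeff (e i) := by
      simp only [Function.apply_update (fun _ => secondDiffCoeff), prod_update_of_mem (mem_univ a),
        ← mul_prod_erase univ (fun i => secondDiffCoeff (e i)) (mem_univ a), hea]
      simp [secondDiffCoeff, sdiff_singleton_eq_erase]
    have hpoint : (fun i => Function.update x a (x a + t * h a) i + e i * h i) =
        fun i => x i + (Function.update e a t i : ℕ) * h i := by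
      funext i
      rcases eq_or_ne i a with rfl | hi <;> simp [*]
    rw [hprod, hpoint, mul_assoc]

lemma faberCoeff_eq_sum (j k : Fin d → ℤ) (f : (Fin d → ℝ) → ℝ) :
    faberCoeff j k f = ∑ e ∈ Fintype.piFinset (fun _ => range 3),
      (∏ i, faberWeight (j i) (e i)) * f (fun i => faberNode (j i) (k i) (e i)) := by
  set E := filter (fun i => j i ≠ -1) univ
  have hmem : ∀ i, i ∈ E.toList ↔ j i ≠ -1 := by simp [E]
  have hsub : Fintype.piFinset (fun i => if i ∈ E.toList then range 3 else {0}) ⊆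
      Fintype.piFinset (fun _ => range 3) :=
    Fintype.piFinset_subset _ _ fun i => by split_ifs <;> simp
  rw [faberCoeff, iterDiff, foldr_secondDiff_eq_sum _ _ (nodup_toList E), mul_sum,
    ← sum_subset hsub]
  · refine sum_congr rfl fun e he => ?_
    have he0 : ∀ i, j i = -1 → e i = 0 := fun i hi => by
      simpa [hmem, hi] using Fintype.mem_piFinset.1 he i
    have hweight : ∀ i, faberWeight (j i) (e i) =
        (if j i ≠ -1 then -(1:ℝ) / 2 else 1) * secondDiffCoeff (e i) := fun i => by
      by_cases hi : j i = -1
      · simp [faberWeight, secondDiffCoeff, hi, he0 i hi]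
      · simp only [faberWeight, hi, if_false, ne_eq, not_false_eq_true, if_true]
        ring
    simp only [hweight, prod_mul_distrib, prod_ite, prod_const, one_pow, mul_one]
    rw [mul_assoc]
    rfl
  · intro e he hne
    obtain ⟨i, hi⟩ := not_forall.1 (mt Fintype.mem_piFinset.2 hne)
    have hji : j i = -1 := by
      by_contra h
      exact hi (by simpa [hmem, h] using Fintype.mem_piFinset.1 he i)
    have hei : e i ≠ 0 := by simpa [hmem, hji] using hi
    rw [prod_eq_zero (mem_univ i) (by simp [faberWeight, hji, hei]), zero_mul]

/-- A box containing every index `(j, k, e)` with `j ≤ N`, `k ∈ D_j`; `faberNodeWeight` vanishes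
off `k ∈ D_j`, so the partial sum becomes a sum over a product set. -/
def faberIndexBox (N : ℕ) : Finset (ℤ × ℤ × ℕ) :=
  Icc (-1 : ℤ) N ×ˢ (Icc (0 : ℤ) (2 ^ N) ×ˢ range 3)

def faberNodeWeight (y : ℝ) (σ : ℤ × ℤ × ℕ) : ℝ :=
  if σ.2.1 ∈ Dj σ.1 then faberWeight σ.1 σ.2.2 * faberC σ.1 σ.2.1 y else 0

def dyadicInterpPi (M : ℕ) (f : (Fin d → ℝ) → ℝ) (x : Fin d → ℝ) : ℝ :=
  ∑ m ∈ Fintype.piFinset (fun _ => range (2 ^ M + 1)),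
    (∏ i, nodalHat M (m i) (x i)) * f (fun i => m i / 2 ^ M)

lemma Dj_subset_Icc {N : ℕ} {j : ℤ} (hj : j ∈ Icc (-1 : ℤ) N) : Dj j ⊆ Icc 0 (2 ^ N) := by
  rw [mem_Icc] at hj
  intro k hk
  have h1 : (1 : ℤ) ≤ 2 ^ N := one_le_pow₀ (by norm_num)
  rw [mem_Icc]
  unfold Dj at hk
  split_ifs at hk with h
  · simp only [mem_insert, mem_singleton] at hk
    omega
  · have : (2 : ℤ) ^ j.toNat ≤ 2 ^ N := pow_le_pow_right₀ (by norm_num) (by omega)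
    rw [mem_Ico] at hk
    omega

lemma sum_faberIndexBox_eq_dyadicInterp (N : ℕ) (g : ℝ → ℝ) {y : ℝ}
    (hy : y ∈ Set.Icc (0:ℝ) 1) :
    ∑ σ ∈ faberIndexBox N, faberNodeWeight y σ * g (faberNode σ.1 σ.2.1 σ.2.2) =
      ∑ m ∈ range (2 ^ (N + 1) + 1), nodalHat (N + 1) m y * g (m / 2 ^ (N + 1)) := by
  rw [← dyadicInterp, ← sum_faberC_eq_dyadicInterp (N + 1) g hy, faberIndexBox, sum_product]
  push_cast
  rw [add_sub_cancel_right]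
  refine sum_congr rfl fun j hj => ?_
  rw [sum_product, ← sum_subset (Dj_subset_Icc hj)]
  · refine sum_congr rfl fun k hk => ?_
    simp [faberNodeWeight, hk, faberCoeff₁, sum_mul, mul_right_comm]
  · intro k _ hk
    simp [faberNodeWeight, hk]

lemma sum_DjSet_faberCoeff_mul_faberFnC (j : Fin d → ℤ) {N : ℕ}
    (hj : j ∈ Fintype.piFinset fun _ => Icc (-1 : ℤ) N) (f : (Fin d → ℝ) → ℝ)
    (x : Fin d → ℝ) :
    ∑ k ∈ DjSet j, faberCoeff j k f * faberFnC j k x =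
      ∑ k ∈ Fintype.piFinset (fun _ => Icc 0 (2 ^ N)),
        ∑ e ∈ Fintype.piFinset (fun _ => range 3),
        (∏ i, faberNodeWeight (x i) (j i, k i, e i)) *
          f (fun i => faberNode (j i) (k i) (e i)) := by
  have hsub : DjSet j ⊆ Fintype.piFinset (fun _ => Icc 0 (2 ^ N)) :=
    Fintype.piFinset_subset _ _ fun i => Dj_subset_Icc (Fintype.mem_piFinset.1 hj i)
  rw [← sum_subset hsub]
  · refine sum_congr rfl fun k hk => ?_
    have hk' : ∀ i, k i ∈ Dj (j i) := Fintype.mem_piFinset.1 hk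
    simp only [faberCoeff_eq_sum, faberNodeWeight, hk', if_true, prod_mul_distrib, sum_mul,
      faberFnC]
    exact sum_congr rfl fun e _ => by ring
  · intro k _ hk
    obtain ⟨i, hi⟩ := not_forall.1 (mt Fintype.mem_piFinset.2 hk)
    refine sum_eq_zero fun e _ => ?_
    rw [prod_eq_zero (mem_univ i) (by simp [faberNodeWeight, hi]), zero_mul]

lemma faberPartialSum_eq_dyadicInterpPi (N : ℕ) (f : (Fin d → ℝ) → ℝ) {x : Fin d → ℝ}
    (hx : x ∈ unitCube d) :
    ∑ j ∈ Fintype.piFinset (fun _ : Fin d => Icc (-1 : ℤ) N),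
        ∑ k ∈ DjSet j, faberCoeff j k f * faberFnC j k x =
      dyadicInterpPi (N + 1) f x := by
  rw [sum_congr rfl fun j hj => sum_DjSet_faberCoeff_mul_faberFnC j hj f x]
  simp only [sum_piFinset_sum_piFinset]
  exact sum_piFinset_prod_mul_comp_eq _ _ _ _ _ _
    (fun i g => sum_faberIndexBox_eq_dyadicInterp N g ⟨hx.1 i, hx.2 i⟩) f

lemma tendstoUniformlyOn_dyadicInterpPi {f : (Fin d → ℝ) → ℝ}
    (hf : ContinuousOn f (unitCube d)) :
    TendstoUniformlyOn (fun M => dyadicInterpPi M f) f atTop (unitCube d) := by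
  rw [Metric.tendstoUniformlyOn_iff]
  intro ε hε
  obtain ⟨δ, hδ, hfδ⟩ := Metric.uniformContinuousOn_iff.1
    (isCompact_Icc.uniformContinuousOn_of_continuous hf) (ε / 2) (half_pos hε)
  have hmesh : ∀ᶠ M : ℕ in atTop, 1 / 2 ^ M < δ := by
    simpa [one_div, inv_pow] using (tendsto_pow_atTop_nhds_zero_of_lt_one
      (by norm_num : (0:ℝ) ≤ 1 / 2) (by norm_num)).eventually (gt_mem_nhds hδ)
  filter_upwards [hmesh] with M hM x hx
  have hx' : ∀ i, x i ∈ Set.Icc (0:ℝ) 1 := fun i => ⟨hx.1 i, hx.2 i⟩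
  rw [Real.dist_eq]
  refine (abs_sub_sum_mul_le _ (fun m _ => prod_nonneg fun i _ => nodalHat_nonneg _ _ _) ?_
    ?_).trans_lt (half_lt_self hε)
  · rw [← prod_univ_sum (fun _ => range (2 ^ M + 1)) fun i m => nodalHat M m (x i)]
    exact prod_eq_one fun i _ => sum_nodalHat_eq_one M (hx' i)
  · intro m hm hw
    have hnode : (fun i => (m i : ℝ) / 2 ^ M) ∈ unitCube d := by
      refine ⟨fun i => by positivity, fun i => ?_⟩
      have hmi : m i ≤ 2 ^ M := Nat.lt_succ_iff.1 (mem_range.1 (Fintype.mem_piFinset.1 hm i))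
      exact div_le_one_of_le₀ (by exact_mod_cast hmi : (m i : ℝ) ≤ 2 ^ M) (by positivity)
    have hdist : dist x (fun i => (m i : ℝ) / 2 ^ M) < δ := by
      refine (dist_pi_lt_iff hδ).2 fun i => ?_
      rw [Real.dist_eq]
      have := abs_sub_lt_of_nodalHat_ne_zero ((prod_ne_zero_iff.1 hw) i (mem_univ i))
      push_cast at this
      exact this.trans hM
    rw [← Real.dist_eq]
    exact (hfδ x hx _ hnode hdist).le

end

end FaberSchauder

theorem statement0_general (d : ℕ) (f : (Fin d → ℝ) → ℝ)
    (hf : ContinuousOn f (unitCube d)) :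
    TendstoUniformlyOn
      (fun (N : ℕ) (x : Fin d → ℝ) =>
        ∑ j ∈ (Fintype.piFinset fun _ : Fin d => Finset.Icc (-1 : ℤ) (N : ℤ)),
          ∑ k ∈ DjSet j, faberCoeff j k f * faberFnC j k x)
      f atTop (unitCube d) :=
  ((FaberSchauder.tendstoUniformlyOn_dyadicInterpPi hf).seq_tendstoUniformlyOn _
    (tendsto_add_atTop_nat 1)).congr
    (Eventually.of_forall fun N _ hx =>
      (FaberSchauder.faberPartialSum_eq_dyadicInterpPi N f hx).symm)

/-- uniform convergence of the Faber–Schauder series of a continuous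
function on the unit cube, with partial sums over levels `max_i (j_i)_+ ≤ N`. -/
theorem statement0 (d : ℕ) (hd : 1 ≤ d) (f : (Fin d → ℝ) → ℝ)
    (hf : ContinuousOn f (unitCube d)) :
    TendstoUniformlyOn
      (fun (N : ℕ) (x : Fin d → ℝ) =>
        ∑ j ∈ (Fintype.piFinset fun _ : Fin d => Finset.Icc (-1 : ℤ) (N : ℤ)),
          ∑ k ∈ DjSet j, faberCoeff j k f * faberFnC j k x)
      f atTop (unitCube d) :=
  statement0_general d f hf
end
end

section
/- (Non-compactness of the limiting embedding into L_∞) Let 0 < p < ∞, 0 < q ≤ ∞, and let m ∈ ℕ with m > 1/p. For a continuous function g : ℝ → ℝ define the Besov quasinorm N(g) := ‖g‖_{L_p(ℝ)} + ( ∑_{k=0}^∞ [ 2^{k/p} · sup_{0 < h ≤ 2^{−k}} ‖Δ^m_h g‖_{L_p(ℝ)} ]^q )^{1/q} (with the supremum over k in place of the q-sum when q = ∞). Then there exists a constant C > 0 (depending only on p, q, m) such that the hat functions v_{j,0}, j ∈ ℕ₀, satisfy N(v_{j,0}) ≤ C for all j ∈ ℕ₀, while ‖v_{j,0} − v_{ℓ,0}‖_{sup}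 ≥ 1 whenever j ≠ ℓ. In particular, the set {g : ℝ → ℝ continuous, supported in [0,1], N(g) ≤ C} is not totally bounded in the sup-norm. -/
/-!
Write `W j k = 2^{k/p} sup_{0<h≤2^{-k}} ‖Δ^m_h v_{j,0}‖_p`. For `k ≤ j` the difference is bounded
by `2^m` and supported on `m + 1` translates of `[0, 2^{-j}]`, so `W j k ≲ 2^{-(j-k)/p}`. For
`k ≥ j` we use that `v_{j,0}` is `2^{j+1}`-Lipschitz, so `|Δ^m_h v_{j,0}| ≲ 2^j h`. If `m ≥ 2`,
`Δ^m_h` kills affine functions, so `Δ^m_h v_{j,0}(x) = 0` unless `[x, x + m h]` contains one of the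
three kinks `0, 2^{-j-1}, 2^{-j}`; this set has measure `≤ 3 m h`, whence `W j k ≲ 2^{-(k-j)}`. If
`m = 1`, then `p > 1` and the crude support bound already gives `W j k ≲ 2^{-(k-j)(1-1/p)}`.
So `W j k` decays geometrically in `|j - k|`, and its `ℓ^q` quasinorm is bounded uniformly in `j`.
On the other hand `v_{j,0}(2^{-j-1}) = 1` while `v_{l,0}(2^{-j-1}) = 0` for `l > j`, so the hats
form an infinite `1`-separated family inside a ball of the Besov quasinorm.
-/

open MeasureTheory Filter
open scoped ENNReal NNReal

noncomputable section

lemma norm_fwdDiff_iter_le {M G : Type*} [AddCommMonoid M] [SeminormedAddCommGroup G]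
    {f : M → G} {C : ℝ} (hf : ∀ x, ‖f x‖ ≤ C) (h : M) (n : ℕ) (x : M) :
    ‖(fwdDiff h)^[n] f x‖ ≤ 2 ^ n * C := by
  induction n generalizing x with
  | zero => simpa using hf x
  | succ n ih =>
    rw [Function.iterate_succ_apply']
    calc ‖(fwdDiff h)^[n] f (x + h) - (fwdDiff h)^[n] f x‖
        ≤ ‖(fwdDiff h)^[n] f (x + h)‖ + ‖(fwdDiff h)^[n] f x‖ := norm_sub_le _ _
      _ ≤ 2 ^ n * C + 2 ^ n * C := add_le_add (ih _) (ih _)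
      _ = 2 ^ (n + 1) * C := by ring

lemma norm_fwdDiff_le_of_lipschitzWith {M G : Type*} [SeminormedAddCommGroup M]
    [SeminormedAddCommGroup G] {K : ℝ≥0} {f : M → G} (hf : LipschitzWith K f) (h x : M) :
    ‖fwdDiff h f x‖ ≤ K * ‖h‖ := by
  simpa [fwdDiff, dist_eq_norm] using hf.dist_le_mul (x + h) x

lemma fwdDiff_iter_affine_eq_zero {R : Type*} [CommRing R] (a c h : R) (n : ℕ) :
    (fwdDiff h)^[n + 2] (fun x => a * x + c) = 0 := by
  have hconst : fwdDiff h (fun x => a * x + c) = fun _ => a * h := by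
    ext x; simp only [fwdDiff]; ring
  rw [Function.iterate_add_apply, Function.iterate_succ_apply, Function.iterate_one, hconst,
    fwdDiff_const]
  exact Function.iterate_fixed (fwdDiff_const (h := h) (0 : R)) n

lemma volume_biUnion_Icc_le {ι : Type*} (s : Finset ι) {a b : ι → ℝ} {ℓ : ℝ}
    (h : ∀ i ∈ s, b i - a i ≤ ℓ) :
    volume (⋃ i ∈ s, Set.Icc (a i) (b i)) ≤ ENNReal.ofReal (s.card * ℓ) := by
  have hℓ : ∀ i ∈ s, volume (Set.Icc (a i) (b i)) ≤ ENNReal.ofReal ℓ := fun i hi => by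
    rw [Real.volume_Icc]; exact ENNReal.ofReal_le_ofReal (h i hi)
  calc volume (⋃ i ∈ s, Set.Icc (a i) (b i))
      ≤ ∑ i ∈ s, volume (Set.Icc (a i) (b i)) := measure_biUnion_finset_le _ _
    _ ≤ ∑ _i ∈ s, ENNReal.ofReal ℓ := Finset.sum_le_sum hℓ
    _ = ENNReal.ofReal (s.card * ℓ) := by
      rw [Finset.sum_const, nsmul_eq_mul, ENNReal.ofReal_mul (by positivity),
        ENNReal.ofReal_natCast]

lemma volume_biUnion_Icc_sub_le (m : ℕ) (h L : ℝ) :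
    volume (⋃ i ∈ Finset.range (m + 1), Set.Icc (-(i * h)) (L - i * h)) ≤
      ENNReal.ofReal ((m + 1) * L) :=
  (volume_biUnion_Icc_le _ fun i _ => (sub_neg_eq_add _ _).trans_le (sub_add_cancel _ _).le).trans
    (by simp)

lemma eLpNorm_le_of_support_subset {α E : Type*} [MeasurableSpace α] {μ : Measure α}
    [NormedAddCommGroup E] {f : α → E} {s : Set α} {p C V : ℝ} (hp : 0 < p) (hV : 0 ≤ V)
    (hfs : Function.support f ⊆ s) (hf : ∀ x, ‖f x‖ ≤ C) (hs : μ s ≤ ENNReal.ofReal V) :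
    eLpNorm f (ENNReal.ofReal p) μ ≤ ENNReal.ofReal (V ^ (1 / p) * C) := by
  rw [← eLpNorm_restrict_eq_of_support_subset hfs]
  calc eLpNorm f (ENNReal.ofReal p) (μ.restrict s)
      ≤ μ.restrict s Set.univ ^ (ENNReal.ofReal p).toReal⁻¹ * ENNReal.ofReal C :=
        eLpNorm_le_of_ae_bound (ae_of_all _ hf)
    _ ≤ ENNReal.ofReal V ^ (1 / p) * ENNReal.ofReal C := by
        rw [Measure.restrict_apply_univ, ENNReal.toReal_ofReal hp.le, one_div]
        gcongr
    _ = ENNReal.ofReal (V ^ (1 / p) * C) := by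
        rw [ENNReal.ofReal_rpow_of_nonneg hV (by positivity), ENNReal.ofReal_mul (by positivity)]

lemma two_rpow_natCast_div (k : ℕ) (p : ℝ) : (2:ℝ) ^ ((k:ℝ) / p) = ((2:ℝ) ^ (1 / p)) ^ k := by
  rw [← Real.rpow_mul_natCast zero_le_two]
  ring_nf

lemma inv_two_pow_rpow (j : ℕ) (p : ℝ) : ((2:ℝ) ^ j)⁻¹ ^ (1 / p) = (((2:ℝ) ^ (1 / p)) ^ j)⁻¹ := by
  rw [Real.inv_rpow (by positivity), ← Real.rpow_natCast_mul zero_le_two,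
    ← Real.rpow_mul_natCast zero_le_two, mul_comm]

lemma tsum_pow_dist_le (σ : ℝ≥0∞) (j : ℕ) : ∑' k, σ ^ Nat.dist j k ≤ 2 * (1 - σ)⁻¹ := by
  rw [← ENNReal.summable.sum_add_tsum_nat_add' (k := j), two_mul, ← ENNReal.tsum_geometric]
  refine add_le_add ?_ (le_of_eq (tsum_congr fun n => ?_))
  · calc ∑ k ∈ Finset.range j, σ ^ Nat.dist j k
        = ∑ k ∈ Finset.range j, σ ^ (k + 1) := by
          rw [← Finset.sum_range_reflect]
          refine Finset.sum_congr rfl fun k hk => ?_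
          rw [Finset.mem_range] at hk
          rw [Nat.dist_eq_sub_of_le_right (by omega)]
          congr 1
          omega
      _ ≤ ∑ k ∈ Finset.range (j + 1), σ ^ k := by
          rw [Finset.sum_range_succ']; exact le_self_add
      _ ≤ ∑' k, σ ^ k := ENNReal.sum_le_tsum _
  · rw [Nat.dist_eq_sub_of_le (Nat.le_add_left j n), Nat.add_sub_cancel]

def OffDiagonalGeometricDecay (t : ℕ → ℕ → ℝ≥0∞) : Prop :=
  ∃ c ρ : ℝ≥0∞, c ≠ ⊤ ∧ ρ < 1 ∧ ∀ j k, t j k ≤ c * ρ ^ Nat.dist j k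

lemma OffDiagonalGeometricDecay.of_le_of_ge {t : ℕ → ℕ → ℝ≥0∞} {c₁ c₂ ρ₁ ρ₂ : ℝ≥0∞}
    (hc₁ : c₁ ≠ ⊤) (hc₂ : c₂ ≠ ⊤) (hρ₁ : ρ₁ < 1) (hρ₂ : ρ₂ < 1)
    (h₁ : ∀ j k, k ≤ j → t j k ≤ c₁ * ρ₁ ^ (j - k))
    (h₂ : ∀ j k, j ≤ k → t j k ≤ c₂ * ρ₂ ^ (k - j)) :
    OffDiagonalGeometricDecay t := by
  refine ⟨max c₁ c₂, max ρ₁ ρ₂, max_ne_top hc₁ hc₂, max_lt hρ₁ hρ₂, fun j k => ?_⟩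
  rcases le_total k j with hkj | hjk
  · rw [Nat.dist_eq_sub_of_le_right hkj]
    exact (h₁ j k hkj).trans (by gcongr <;> exact le_max_left _ _)
  · rw [Nat.dist_eq_sub_of_le hjk]
    exact (h₂ j k hjk).trans (by gcongr <;> exact le_max_right _ _)

def lqNorm (q : ℝ≥0∞) (t : ℕ → ℝ≥0∞) : ℝ≥0∞ :=
  if q = ⊤ then ⨆ k, t k else (∑' k, t k ^ q.toReal) ^ (1 / q.toReal)

lemma OffDiagonalGeometricDecay.exists_lqNorm_le {t : ℕ → ℕ → ℝ≥0∞}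
    (ht : OffDiagonalGeometricDecay t) {q : ℝ≥0∞} (hq : 0 < q) :
    ∃ E : ℝ≥0∞, E ≠ ⊤ ∧ ∀ j, lqNorm q (t j) ≤ E := by
  obtain ⟨c, ρ, hc, hρ, hle⟩ := ht
  by_cases hqtop : q = ⊤
  · refine ⟨c, hc, fun j => ?_⟩
    rw [lqNorm, if_pos hqtop]
    exact iSup_le fun k => (hle j k).trans (mul_le_of_le_one_right' (pow_le_one₀ zero_le hρ.le))
  set Q := q.toReal
  have hQ : 0 < Q := ENNReal.toReal_pos hq.ne' hqtop
  have hσ : ρ ^ Q < 1 := ENNReal.rpow_lt_one hρ hQ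
  refine ⟨(c ^ Q * (2 * (1 - ρ ^ Q)⁻¹)) ^ (1 / Q), ?_, fun j => ?_⟩
  · refine ENNReal.rpow_ne_top_of_nonneg (by positivity) (ENNReal.mul_ne_top
      (ENNReal.rpow_ne_top_of_nonneg hQ.le hc) (ENNReal.mul_ne_top (by simp) ?_))
    exact ENNReal.inv_ne_top.2 (tsub_pos_of_lt hσ).ne'
  rw [lqNorm, if_neg hqtop]
  gcongr
  calc ∑' k, t j k ^ Q ≤ ∑' k, c ^ Q * (ρ ^ Q) ^ Nat.dist j k := by
        gcongr with k
        calc t j k ^ Q ≤ (c * ρ ^ Nat.dist j k) ^ Q := by gcongr; exact hle j k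
          _ = c ^ Q * (ρ ^ Q) ^ Nat.dist j k := by
            rw [ENNReal.mul_rpow_of_nonneg _ _ hQ.le, ← ENNReal.rpow_natCast, ← ENNReal.rpow_mul,
              ← ENNReal.rpow_natCast, ← ENNReal.rpow_mul, mul_comm (Nat.dist j k : ℝ)]
    _ = c ^ Q * ∑' k, (ρ ^ Q) ^ Nat.dist j k := ENNReal.tsum_mul_left
    _ ≤ c ^ Q * (2 * (1 - ρ ^ Q)⁻¹) := by gcongr; exact tsum_pow_dist_le _ j

lemma not_totallyBounded_of_le_dist {X : Type*} [PseudoMetricSpace X] {s : Set X} {u : ℕ → X}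
    (hu : ∀ n, u n ∈ s) {ε : ℝ} (hε : 0 < ε) (hsep : Pairwise fun m n => ε ≤ dist (u m) (u n)) :
    ¬TotallyBounded s := by
  intro hs
  obtain ⟨t, -, htfin, hcover⟩ := Metric.finite_approx_of_totallyBounded hs (ε / 2) (half_pos hε)
  choose y hyt hy using fun n => Set.mem_iUnion₂.1 (hcover (hu n))
  obtain ⟨m, -, n, -, hmn, hymn⟩ :=
    Set.infinite_univ.exists_ne_map_eq_of_mapsTo (fun n _ => hyt n) htfin
  have hm := Metric.mem_ball.1 (hy m)
  have hn := Metric.mem_ball.1 (hy n)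
  rw [hymn] at hm
  linarith [hsep hmn, dist_triangle_right (u m) (u n) (y n)]

lemma fdiffR_eq_fwdDiff_iter (m : ℕ) (h : ℝ) (g : ℝ → ℝ) : fdiffR m h g = (fwdDiff h)^[m] g := by
  ext x
  simp [fdiffR, fwdDiff_iter_eq_sum_shift]

lemma support_fdiffR_subset (m : ℕ) (h : ℝ) (g : ℝ → ℝ) :
    Function.support (fdiffR m h g) ⊆
      ⋃ i ∈ Finset.range (m + 1), (· + i * h) ⁻¹' Function.support g := by
  intro x hx
  obtain ⟨i, hi, hne⟩ := Finset.exists_ne_zero_of_sum_ne_zero hx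
  exact Set.mem_biUnion hi (right_ne_zero_of_mul hne)

lemma fdiffR_eq_zero_of_affineOn {m : ℕ} (hm : 2 ≤ m) {h : ℝ} (hh : 0 ≤ h) {g : ℝ → ℝ}
    {x a c : ℝ} (hg : ∀ t ∈ Set.Icc x (x + m * h), g t = a * t + c) : fdiffR m h g x = 0 := by
  have hnodes : ∀ i ∈ Finset.range (m + 1), g (x + i * h) = a * (x + i * h) + c := by
    intro i hi
    have him : (i : ℝ) ≤ m := by exact_mod_cast Finset.mem_range_succ_iff.mp hi
    exact hg _ ⟨by nlinarith [i.cast_nonneg (α := ℝ)], by nlinarith⟩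
  obtain ⟨n, rfl⟩ := Nat.exists_eq_add_of_le' hm
  calc fdiffR (n + 2) h g x = fdiffR (n + 2) h (fun t => a * t + c) x :=
        Finset.sum_congr rfl fun i hi => by rw [hnodes i hi]
    _ = 0 := by rw [fdiffR_eq_fwdDiff_iter, fwdDiff_iter_affine_eq_zero]; rfl

lemma NBesov_eq (p : ℝ) (q : ℝ≥0∞) (m : ℕ) (g : ℝ → ℝ) :
    NBesov p q m g = eLpNorm g (ENNReal.ofReal p) volume +
      lqNorm q fun k => ENNReal.ofReal ((2:ℝ) ^ ((k:ℝ) / p)) * modk p m k g :=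
  rfl

lemma hatFn_of_nonpos {y : ℝ} (hy : y ≤ 0) : hatFn y = 0 := by
  unfold hatFn
  split_ifs with h
  · rw [show y = 0 by linarith [h.1]]; norm_num
  · rfl

lemma hatFn_of_one_le {y : ℝ} (hy : 1 ≤ y) : hatFn y = 0 := by
  unfold hatFn
  split_ifs with h
  · rw [show y = 1 by linarith [h.2]]; norm_num
  · rfl

lemma hatFn_of_le_half {y : ℝ} (h0 : 0 ≤ y) (h1 : y ≤ 1 / 2) : hatFn y = 2 * y := by
  rw [hatFn, if_pos ⟨h0, by linarith⟩, abs_of_nonpos (by linarith)]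
  ring

lemma hatFn_of_half_le {y : ℝ} (h0 : 1 / 2 ≤ y) (h1 : y ≤ 1) : hatFn y = 2 - 2 * y := by
  rw [hatFn, if_pos ⟨by linarith, h1⟩, abs_of_nonneg (by linarith)]
  ring

lemma hatFn_eq_max (y : ℝ) : hatFn y = max (1 - |2 * y - 1|) 0 := by
  unfold hatFn
  split_ifs with h
  · have : |2 * y - 1| ≤ 1 := abs_le.mpr ⟨by linarith [h.1], by linarith [h.2]⟩
    rw [max_eq_left (by linarith)]
  · rw [not_and_or, not_le, not_le] at h
    rw [max_eq_right]
    rcases h with h | h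
    · rw [abs_of_neg (by linarith)]; linarith
    · rw [abs_of_pos (by linarith)]; linarith

lemma norm_hatFn_le_one (y : ℝ) : ‖hatFn y‖ ≤ 1 := by
  rw [hatFn_eq_max, Real.norm_eq_abs, abs_of_nonneg (le_max_right _ _)]
  exact max_le (by linarith [abs_nonneg (2 * y - 1)]) zero_le_one

lemma lipschitzWith_hatFn : LipschitzWith 2 hatFn := by
  refine LipschitzWith.of_dist_le_mul fun x y => ?_
  simp only [hatFn_eq_max, Real.dist_eq, NNReal.coe_ofNat]
  calc |max (1 - |2 * x - 1|) 0 - max (1 - |2 * y - 1|) 0|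
      ≤ |(1 - |2 * x - 1|) - (1 - |2 * y - 1|)| := abs_max_sub_max_le_abs _ _ _
    _ = |(|2 * y - 1|) - (|2 * x - 1|)| := by ring_nf
    _ ≤ |(2 * y - 1) - (2 * x - 1)| := abs_abs_sub_abs_le_abs_sub _ _
    _ = 2 * |x - y| := by
      rw [show (2 * y - 1) - (2 * x - 1) = 2 * (y - x) by ring, abs_mul, abs_two, abs_sub_comm]

lemma hatFn_exists_affine {u w : ℝ} (h : ∀ b ∈ ({0, 1 / 2, 1} : Finset ℝ), b ∉ Set.Icc u w) :
    ∃ a c : ℝ, ∀ y ∈ Set.Icc u w, hatFn y = a * y + c := by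
  simp only [Finset.mem_insert, Finset.mem_singleton, forall_eq_or_imp, forall_eq,
    Set.mem_Icc, not_and_or, not_le] at h
  obtain ⟨h0, hhalf, h1⟩ := h
  refine if hw0 : w < 0 then ⟨0, 0, fun y hy => ?_⟩
    else if hwh : w < 1 / 2 then ⟨2, 0, fun y hy => ?_⟩
    else if hw1 : w < 1 then ⟨-2, 2, fun y hy => ?_⟩
    else ⟨0, 0, fun y hy => ?_⟩ <;> obtain ⟨hy0, hy1⟩ := hy
  · rw [hatFn_of_nonpos (by linarith)]; ring
  · rw [hatFn_of_le_half (by grind) (by linarith)]; ring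
  · rw [hatFn_of_half_le (by grind) (by linarith)]; ring
  · rw [hatFn_of_one_le (by grind)]; ring

lemma lipschitzWith_hatj (j : ℕ) : LipschitzWith (2 * 2 ^ j) (hatj j) := by
  have := lipschitzWith_hatFn.comp (lipschitzWith_smul ((2:ℝ) ^ j))
  rwa [show ‖(2:ℝ) ^ j‖₊ = 2 ^ j by ext; simp] at this

lemma continuous_hatj (j : ℕ) : Continuous (hatj j) := (lipschitzWith_hatj j).continuous

lemma norm_hatj_le_one (j : ℕ) (x : ℝ) : ‖hatj j x‖ ≤ 1 := norm_hatFn_le_one _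

lemma support_hatj_subset (j : ℕ) : Function.support (hatj j) ⊆ Set.Icc 0 ((2:ℝ) ^ j)⁻¹ := by
  intro x hx
  by_contra hmem
  rw [Set.mem_Icc, not_and_or, not_le, not_le, inv_lt_iff_one_lt_mul₀' (by positivity)] at hmem
  refine hx (hmem.elim (fun h => hatFn_of_nonpos ?_) (fun h => hatFn_of_one_le h.le))
  exact mul_nonpos_of_nonneg_of_nonpos (by positivity) h.le

lemma hatj_exists_affine (j : ℕ) {u w : ℝ}
    (h : ∀ b ∈ ({0, 1 / 2, 1} : Finset ℝ), b / 2 ^ j ∉ Set.Icc u w) :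
    ∃ a c : ℝ, ∀ t ∈ Set.Icc u w, hatj j t = a * t + c := by
  have h2j : (0:ℝ) < 2 ^ j := by positivity
  obtain ⟨a, c, hac⟩ := hatFn_exists_affine (u := 2 ^ j * u) (w := 2 ^ j * w) fun b hb hbm =>
    h b hb ⟨by rw [le_div_iff₀' h2j]; exact hbm.1, by rw [div_le_iff₀' h2j]; exact hbm.2⟩
  refine ⟨a * 2 ^ j, c, fun t ht => ?_⟩
  rw [hatj, hac _ ⟨by gcongr; exact ht.1, by gcongr; exact ht.2⟩]
  ring

lemma exists_one_le_abs_hatj_sub {j l : ℕ} (hjl : j ≠ l) :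
    ∃ x : ℝ, 1 ≤ |hatj j x - hatj l x| := by
  wlog hlt : j < l generalizing j l
  · obtain ⟨x, hx⟩ := this hjl.symm (by omega)
    exact ⟨x, by rwa [abs_sub_comm]⟩
  refine ⟨((2:ℝ) ^ (j + 1))⁻¹, le_of_eq ?_⟩
  have hj : hatj j ((2:ℝ) ^ (j + 1))⁻¹ = 1 := by
    rw [hatj, pow_succ, mul_inv, ← mul_assoc, mul_inv_cancel₀ (by positivity), one_mul,
      hatFn_of_le_half (by norm_num) (by norm_num)]
    norm_num
  have hl : hatj l ((2:ℝ) ^ (j + 1))⁻¹ = 0 := by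
    refine hatFn_of_one_le ?_
    rw [← div_eq_mul_inv, one_le_div (by positivity)]
    exact pow_le_pow_right₀ one_le_two hlt
  rw [hj, hl]
  norm_num

lemma norm_fdiffR_hatj_le (m : ℕ) (h : ℝ) (j : ℕ) (x : ℝ) : ‖fdiffR m h (hatj j) x‖ ≤ 2 ^ m := by
  simpa [fdiffR_eq_fwdDiff_iter] using norm_fwdDiff_iter_le (norm_hatj_le_one j) h m x

lemma norm_fdiffR_hatj_le_mul {m : ℕ} (hm : 1 ≤ m) (h : ℝ) (j : ℕ) (x : ℝ) :
    ‖fdiffR m h (hatj j) x‖ ≤ 2 ^ m * 2 ^ j * |h| := by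
  obtain ⟨n, rfl⟩ := Nat.exists_eq_add_of_le' hm
  rw [fdiffR_eq_fwdDiff_iter, Function.iterate_succ_apply]
  calc ‖(fwdDiff h)^[n] (fwdDiff h (hatj j)) x‖ ≤ 2 ^ n * (↑(2 * 2 ^ j : ℝ≥0) * ‖h‖) :=
        norm_fwdDiff_iter_le (norm_fwdDiff_le_of_lipschitzWith (lipschitzWith_hatj j) h) h n x
    _ = 2 ^ (n + 1) * 2 ^ j * |h| := by push_cast; rw [Real.norm_eq_abs]; ring

lemma support_fdiffR_hatj_subset (m : ℕ) (h : ℝ) (j : ℕ) :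
    Function.support (fdiffR m h (hatj j)) ⊆
      ⋃ i ∈ Finset.range (m + 1), Set.Icc (-(i * h)) (((2:ℝ) ^ j)⁻¹ - i * h) := by
  refine (support_fdiffR_subset m h _).trans (Set.iUnion₂_mono fun i _ x hx => ?_)
  obtain ⟨h0, h1⟩ := support_hatj_subset j hx
  exact ⟨by linarith, by linarith⟩

lemma support_fdiffR_hatj_subset_of_two_le {m : ℕ} (hm : 2 ≤ m) {h : ℝ} (hh : 0 ≤ h) (j : ℕ) :
    Function.support (fdiffR m h (hatj j)) ⊆
      ⋃ b ∈ ({0, 1 / 2, 1} : Finset ℝ), Set.Icc (b / 2 ^ j - m * h) (b / 2 ^ j) := by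
  intro x hx
  by_contra hmem
  simp only [Set.mem_iUnion, exists_prop, not_exists, not_and] at hmem
  obtain ⟨a, c, hac⟩ := hatj_exists_affine j (u := x) (w := x + m * h) fun b hb hbm =>
    hmem b hb ⟨by linarith [hbm.2], hbm.1⟩
  exact hx (fdiffR_eq_zero_of_affineOn hm hh hac)

section BesovBounds

variable {p : ℝ}

lemma eLpNorm_hatj_le_one (hp : 0 < p) (j : ℕ) :
    eLpNorm (hatj j) (ENNReal.ofReal p) volume ≤ 1 := by
  have hc : ((2:ℝ) ^ j)⁻¹ ≤ 1 := inv_le_one_of_one_le₀ (one_le_pow₀ one_le_two)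
  refine (eLpNorm_le_of_support_subset (V := ((2:ℝ) ^ j)⁻¹) hp (by positivity)
    (support_hatj_subset j) (norm_hatj_le_one j) (by rw [Real.volume_Icc, sub_zero])).trans ?_
  rw [mul_one, ← ENNReal.ofReal_one]
  exact ENNReal.ofReal_le_ofReal (Real.rpow_le_one (by positivity) hc (by positivity))

lemma eLpNorm_fdiffR_hatj_le (hp : 0 < p) (m : ℕ) (h : ℝ) (j : ℕ) :
    eLpNorm (fdiffR m h (hatj j)) (ENNReal.ofReal p) volume ≤
      ENNReal.ofReal (((m + 1) * ((2:ℝ) ^ j)⁻¹) ^ (1 / p) * 2 ^ m) :=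
  eLpNorm_le_of_support_subset hp (by positivity) (support_fdiffR_hatj_subset m h j)
    (norm_fdiffR_hatj_le m h j) (volume_biUnion_Icc_sub_le m h _)

lemma eLpNorm_fdiffR_hatj_le_of_two_le (hp : 0 < p) {m : ℕ} (hm : 2 ≤ m) {h : ℝ} (hh : 0 ≤ h)
    (j : ℕ) :
    eLpNorm (fdiffR m h (hatj j)) (ENNReal.ofReal p) volume ≤
      ENNReal.ofReal ((3 * (m * h)) ^ (1 / p) * (2 ^ m * 2 ^ j * h)) := by
  refine eLpNorm_le_of_support_subset hp (by positivity)
    (support_fdiffR_hatj_subset_of_two_le hm hh j)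
    (fun x => (norm_fdiffR_hatj_le_mul (by omega) h j x).trans_eq (by rw [abs_of_nonneg hh]))
    ((volume_biUnion_Icc_le _ fun b _ => le_of_eq (sub_sub_cancel _ _)).trans
      (ENNReal.ofReal_le_ofReal ?_))
  gcongr
  exact_mod_cast Finset.card_le_three

lemma eLpNorm_fdiffR_hatj_le_mul (hp : 0 < p) {m : ℕ} (hm : 1 ≤ m) {h : ℝ} (hh : 0 ≤ h)
    (j : ℕ) :
    eLpNorm (fdiffR m h (hatj j)) (ENNReal.ofReal p) volume ≤
      ENNReal.ofReal (((m + 1) * ((2:ℝ) ^ j)⁻¹) ^ (1 / p) * (2 ^ m * 2 ^ j * h)) :=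
  eLpNorm_le_of_support_subset hp (by positivity) (support_fdiffR_hatj_subset m h j)
    (fun x => (norm_fdiffR_hatj_le_mul hm h j x).trans_eq (by rw [abs_of_nonneg hh]))
    (volume_biUnion_Icc_sub_le m h _)

lemma modk_hatj_le (hp : 0 < p) (m j k : ℕ) :
    modk p m k (hatj j) ≤ ENNReal.ofReal (((m + 1) * ((2:ℝ) ^ j)⁻¹) ^ (1 / p) * 2 ^ m) :=
  iSup₂_le fun h _ => eLpNorm_fdiffR_hatj_le hp m h j

lemma modk_hatj_le_of_two_le (hp : 0 < p) {m : ℕ} (hm : 2 ≤ m) (j k : ℕ) :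
    modk p m k (hatj j) ≤
      ENNReal.ofReal ((3 * (m * ((2:ℝ) ^ k)⁻¹)) ^ (1 / p) * (2 ^ m * 2 ^ j * ((2:ℝ) ^ k)⁻¹)) := by
  refine iSup₂_le fun h ⟨h0, hk⟩ => (eLpNorm_fdiffR_hatj_le_of_two_le hp hm h0.le j).trans ?_
  rw [zpow_neg, zpow_natCast] at hk
  gcongr

lemma modk_hatj_le_mul (hp : 0 < p) {m : ℕ} (hm : 1 ≤ m) (j k : ℕ) :
    modk p m k (hatj j) ≤
      ENNReal.ofReal (((m + 1) * ((2:ℝ) ^ j)⁻¹) ^ (1 / p) * (2 ^ m * 2 ^ j * ((2:ℝ) ^ k)⁻¹)) := by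
  refine iSup₂_le fun h ⟨h0, hk⟩ => (eLpNorm_fdiffR_hatj_le_mul hp hm h0.le j).trans ?_
  rw [zpow_neg, zpow_natCast] at hk
  gcongr

lemma weighted_modk_hatj_le_of_le (hp : 0 < p) (m : ℕ) {j k : ℕ} (hkj : k ≤ j) :
    ENNReal.ofReal ((2:ℝ) ^ ((k:ℝ) / p)) * modk p m k (hatj j) ≤
      ENNReal.ofReal ((m + 1) ^ (1 / p) * 2 ^ m) *
        ENNReal.ofReal ((2:ℝ) ^ (1 / p))⁻¹ ^ (j - k) := by
  obtain ⟨n, rfl⟩ := Nat.exists_eq_add_of_le hkj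
  calc ENNReal.ofReal ((2:ℝ) ^ ((k:ℝ) / p)) * modk p m k (hatj (k + n))
      ≤ ENNReal.ofReal ((2:ℝ) ^ ((k:ℝ) / p)) *
          ENNReal.ofReal (((m + 1) * ((2:ℝ) ^ (k + n))⁻¹) ^ (1 / p) * 2 ^ m) := by
        gcongr; exact modk_hatj_le hp m _ k
    _ = _ := by
      rw [← ENNReal.ofReal_mul (by positivity), ← ENNReal.ofReal_pow (by positivity),
        ← ENNReal.ofReal_mul (by positivity), Nat.add_sub_cancel_left,
        two_rpow_natCast_div, Real.mul_rpow (by positivity) (by positivity), inv_two_pow_rpow,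
        pow_add, inv_pow]
      field_simp

lemma weighted_modk_hatj_le_of_ge_of_two_le (hp : 0 < p) {m : ℕ} (hm : 2 ≤ m) {j k : ℕ}
    (hjk : j ≤ k) :
    ENNReal.ofReal ((2:ℝ) ^ ((k:ℝ) / p)) * modk p m k (hatj j) ≤
      ENNReal.ofReal ((3 * m) ^ (1 / p) * 2 ^ m) * ENNReal.ofReal 2⁻¹ ^ (k - j) := by
  obtain ⟨n, rfl⟩ := Nat.exists_eq_add_of_le hjk
  calc ENNReal.ofReal ((2:ℝ) ^ (((j + n : ℕ) : ℝ) / p)) * modk p m (j + n) (hatj j)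
      ≤ ENNReal.ofReal ((2:ℝ) ^ (((j + n : ℕ) : ℝ) / p)) * ENNReal.ofReal
          ((3 * m * ((2:ℝ) ^ (j + n))⁻¹) ^ (1 / p) * (2 ^ m * 2 ^ j * ((2:ℝ) ^ (j + n))⁻¹)) := by
        gcongr; rw [mul_assoc]; exact modk_hatj_le_of_two_le hp hm j _
    _ = _ := by
      rw [← ENNReal.ofReal_mul (by positivity), ← ENNReal.ofReal_pow (by positivity),
        ← ENNReal.ofReal_mul (by positivity), Nat.add_sub_cancel_left,
        two_rpow_natCast_div, Real.mul_rpow (by positivity) (by positivity), inv_two_pow_rpow,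
        pow_add, pow_add, inv_pow]
      congr 1
      field_simp

lemma weighted_modk_hatj_le_of_ge (hp : 0 < p) {m : ℕ} (hm : 1 ≤ m) {j k : ℕ} (hjk : j ≤ k) :
    ENNReal.ofReal ((2:ℝ) ^ ((k:ℝ) / p)) * modk p m k (hatj j) ≤
      ENNReal.ofReal ((m + 1) ^ (1 / p) * 2 ^ m) *
        ENNReal.ofReal ((2:ℝ) ^ (1 / p) / 2) ^ (k - j) := by
  obtain ⟨n, rfl⟩ := Nat.exists_eq_add_of_le hjk
  calc ENNReal.ofReal ((2:ℝ) ^ (((j + n : ℕ) : ℝ) / p)) * modk p m (j + n) (hatj j)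
      ≤ ENNReal.ofReal ((2:ℝ) ^ (((j + n : ℕ) : ℝ) / p)) * ENNReal.ofReal
          (((m + 1) * ((2:ℝ) ^ j)⁻¹) ^ (1 / p) * (2 ^ m * 2 ^ j * ((2:ℝ) ^ (j + n))⁻¹)) := by
        gcongr; exact modk_hatj_le_mul hp hm j _
    _ = _ := by
      rw [← ENNReal.ofReal_mul (by positivity), ← ENNReal.ofReal_pow (by positivity),
        ← ENNReal.ofReal_mul (by positivity), Nat.add_sub_cancel_left,
        two_rpow_natCast_div, Real.mul_rpow (by positivity) (by positivity), inv_two_pow_rpow,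
        pow_add, pow_add, div_pow]
      congr 1
      field_simp

lemma offDiagonalGeometricDecay_weighted_modk_hatj (hp : 0 < p) {m : ℕ} (hm : 1 / p < m) :
    OffDiagonalGeometricDecay
      fun j k => ENNReal.ofReal ((2:ℝ) ^ ((k:ℝ) / p)) * modk p m k (hatj j) := by
  have hp' : 0 < 1 / p := by positivity
  have hρ₁ : ENNReal.ofReal ((2:ℝ) ^ (1 / p))⁻¹ < 1 :=
    ENNReal.ofReal_lt_one.2 (inv_lt_one_of_one_lt₀ (Real.one_lt_rpow one_lt_two hp'))
  have hm1 : 1 ≤ m := by exact_mod_cast hp'.trans hm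
  rcases hm1.eq_or_lt with rfl | hm2
  · have hρ₂ : ENNReal.ofReal ((2:ℝ) ^ (1 / p) / 2) < 1 := by
      have hp1 : 1 / p < 1 := by simpa only [Nat.cast_one] using hm
      refine ENNReal.ofReal_lt_one.2 ((div_lt_one two_pos).2 ?_)
      exact (Real.rpow_lt_rpow_of_exponent_lt one_lt_two hp1).trans_eq (Real.rpow_one 2)
    exact .of_le_of_ge ENNReal.ofReal_ne_top ENNReal.ofReal_ne_top hρ₁ hρ₂
      (fun j k => weighted_modk_hatj_le_of_le hp 1)
      (fun j k => weighted_modk_hatj_le_of_ge hp le_rfl)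
  · have hρ₂ : ENNReal.ofReal (2:ℝ)⁻¹ < 1 := ENNReal.ofReal_lt_one.2 (by norm_num)
    exact .of_le_of_ge ENNReal.ofReal_ne_top ENNReal.ofReal_ne_top hρ₁ hρ₂
      (fun j k => weighted_modk_hatj_le_of_le hp m)
      (fun j k => weighted_modk_hatj_le_of_ge_of_two_le hp hm2)

end BesovBounds

/-- non-compactness of the limiting embedding `B^{1/p}_{p,q} → L_∞`:
the hat functions have uniformly bounded Besov quasinorm but are uniformly separated
in the sup-norm. -/
theorem statement17 (p : ℝ) (hp : 0 < p) (q : ℝ≥0∞) (hq : 0 < q) (m : ℕ)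
    (hm : 1 / p < (m:ℝ)) :
    ∃ C : ℝ, 0 < C ∧
      (∀ j : ℕ, NBesov p q m (hatj j) ≤ ENNReal.ofReal C) ∧
      (∀ j l : ℕ, j ≠ l → ∃ x : ℝ, 1 ≤ |hatj j x - hatj l x|) ∧
      ¬ TotallyBounded {g : BoundedContinuousFunction ℝ ℝ |
          (∀ x : ℝ, x ∉ Set.Icc (0:ℝ) 1 → g x = 0) ∧
          NBesov p q m (⇑g) ≤ ENNReal.ofReal C} := by
  obtain ⟨E, hE, hlq⟩ := (offDiagonalGeometricDecay_weighted_modk_hatj hp hm).exists_lqNorm_le hq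
  have hC : ENNReal.ofReal (1 + E).toReal = 1 + E := ENNReal.ofReal_toReal (by simpa using hE)
  have hN : ∀ j, NBesov p q m (hatj j) ≤ ENNReal.ofReal (1 + E).toReal := fun j => by
    rw [hC, NBesov_eq]
    exact add_le_add (eLpNorm_hatj_le_one hp j) (hlq j)
  refine ⟨(1 + E).toReal, ENNReal.toReal_pos (by simp) (by simpa using hE), hN,
    fun j l => exists_one_le_abs_hatj_sub, ?_⟩
  let v (j : ℕ) : BoundedContinuousFunction ℝ ℝ :=
    .ofNormedAddCommGroup (hatj j) (continuous_hatj j) 1 (norm_hatj_le_one j)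
  refine not_totallyBounded_of_le_dist (u := v) (fun j => ⟨fun x hx => ?_, hN j⟩) one_pos
    fun j l hjl => ?_
  · refine Function.notMem_support.1 fun hsupp => hx ⟨(support_hatj_subset j hsupp).1, ?_⟩
    exact (support_hatj_subset j hsupp).2.trans (inv_le_one_of_one_le₀ (one_le_pow₀ one_le_two))
  · obtain ⟨x, hx⟩ := exists_one_le_abs_hatj_sub hjl
    exact hx.trans (BoundedContinuousFunction.dist_coe_le_dist (f := v j) (g := v l) x)
end
end
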